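/- arXiv:2309.11682 — 2 statements merged into one kernel-verified Lean document; each statement's English description precedes it below -/
import Mathlib

section
/- Let m ≥ 1, let b ∈ ℝ^m satisfy b_i ≥ 0 for all i, and let ε ≥ 0. Then the value Σ_i b_i² + 2ε·(max_i b_i) + ε² is the maximum of Σ_i a_i² over all a ∈ ℝ^m with Σ_i |a_i − b_i| ≤ ε; that is, every such a satisfies Σ_i a_i² ≤ Σ_i b_i² + 2ε·(max_i b_i) + ε², and this value is attained by some feasible a (namely by adding ε to a largest coordinate of b). -/
/-! Writing `a = b + d`, each square expands as `aᵢ² = bᵢ² + 2 bᵢ dᵢ + dᵢ²`. The cross terms are at most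
`2 (maxᵢ bᵢ) ∑ |dᵢ|` and the quadratic terms at most `(∑ |dᵢ|)²`, so over the ball `∑ |dᵢ| ≤ ε` the sum
of squares is at most `∑ bᵢ² + 2ε maxᵢ bᵢ + ε²`. Both estimates are sharp when the whole budget `ε` is
spent on one largest coordinate. -/

open Finset

variable {ι : Type*} [Fintype ι]

theorem sum_sq_le_of_abs_le (a b : ι → ℝ) {M : ℝ} (hM : ∀ i, |b i| ≤ M) :
    ∑ i, a i ^ 2 ≤ ∑ i, b i ^ 2 + 2 * M * ∑ i, |a i - b i| + (∑ i, |a i - b i|) ^ 2 := by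
  have h_term : ∀ i, a i ^ 2 ≤ b i ^ 2 + 2 * M * |a i - b i| + |a i - b i| ^ 2 := by
    intro i
    have h_cross : b i * (a i - b i) ≤ M * |a i - b i| :=
      calc b i * (a i - b i) ≤ |b i| * |a i - b i| := (le_abs_self _).trans (abs_mul _ _).le
        _ ≤ M * |a i - b i| := by gcongr; exact hM i
    nlinarith [sq_abs (a i - b i)]
  calc ∑ i, a i ^ 2
      ≤ ∑ i, (b i ^ 2 + 2 * M * |a i - b i| + |a i - b i| ^ 2) := sum_le_sum fun i _ => h_term i
    _ = ∑ i, b i ^ 2 + 2 * M * ∑ i, |a i - b i| + ∑ i, |a i - b i| ^ 2 := by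
        rw [sum_add_distrib, sum_add_distrib, mul_sum]
    _ ≤ ∑ i, b i ^ 2 + 2 * M * ∑ i, |a i - b i| + (∑ i, |a i - b i|) ^ 2 := by
        gcongr
        exact sum_sq_le_sq_sum_of_nonneg fun i _ => abs_nonneg _

theorem sum_abs_pi_single [DecidableEq ι] (i : ι) (ε : ℝ) :
    ∑ j, |(Pi.single i ε : ι → ℝ) j| = |ε| := by
  simp only [Pi.apply_single (fun _ => abs) (fun _ => abs_zero), Fintype.sum_pi_single']

theorem sum_sq_add_pi_single [DecidableEq ι] (b : ι → ℝ) (i : ι) (ε : ℝ) :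
    ∑ j, (b j + (Pi.single i ε : ι → ℝ) j) ^ 2 = ∑ j, b j ^ 2 + 2 * ε * b i + ε ^ 2 := by
  have h_expand : ∀ j, (b j + (Pi.single i ε : ι → ℝ) j) ^ 2
      = b j ^ 2 + (Pi.single i (2 * ε * b i + ε ^ 2) : ι → ℝ) j := by
    intro j
    rcases eq_or_ne j i with rfl | hj
    · simp only [Pi.single_eq_same]; ring
    · simp only [Pi.single_eq_of_ne hj]; ring
  simp only [h_expand, sum_add_distrib, Fintype.sum_pi_single']
  ring

/-- Theorem 1(a), vectorized form: the maximum of `∑ aᵢ²` over the ℓ1 ball of radius `ε`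
around a nonnegative vector `b` equals `∑ bᵢ² + 2ε·(maxᵢ bᵢ) + ε²`. -/
theorem l1_ball_sum_sq_max (m : ℕ) (hm : 1 ≤ m) (b : Fin m → ℝ)
    (hb : ∀ i, 0 ≤ b i) (ε : ℝ) (hε : 0 ≤ ε) :
    IsGreatest {S : ℝ | ∃ a : Fin m → ℝ, (∑ i, |a i - b i|) ≤ ε ∧ S = ∑ i, (a i) ^ 2}
      ((∑ i, (b i) ^ 2) +
        2 * ε * (Finset.univ.sup' (Finset.univ_nonempty_iff.mpr (Fin.pos_iff_nonempty.mp hm)) b)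
        + ε ^ 2) := by
  have hne : (univ : Finset (Fin m)).Nonempty := univ_nonempty_iff.mpr (Fin.pos_iff_nonempty.mp hm)
  set M := univ.sup' hne b
  obtain ⟨i₀, -, hi₀⟩ := exists_mem_eq_sup' hne b
  have hb_le : ∀ i, b i ≤ M := fun i => le_sup' b (mem_univ i)
  have hM : 0 ≤ M := (hb i₀).trans (hb_le i₀)
  constructor
  · refine ⟨b + Pi.single i₀ ε, ?_, ?_⟩
    · simp [sum_abs_pi_single, abs_of_nonneg hε]
    · rw [Pi.add_def, sum_sq_add_pi_single, ← hi₀]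
  · rintro _ ⟨a, ha, rfl⟩
    calc ∑ i, a i ^ 2
        ≤ ∑ i, b i ^ 2 + 2 * M * ∑ i, |a i - b i| + (∑ i, |a i - b i|) ^ 2 :=
          sum_sq_le_of_abs_le a b fun i => (abs_of_nonneg (hb i)).trans_le (hb_le i)
      _ ≤ ∑ i, b i ^ 2 + 2 * ε * M + ε ^ 2 := by
          have hd : 0 ≤ ∑ i, |a i - b i| := sum_nonneg fun i _ => abs_nonneg _
          nlinarith [mul_le_mul_of_nonneg_left ha hM]
end

section
/- Let m ≥ 2, let b ∈ ℝ^m satisfy 1 = b_0 ≥ b_1 ≥ ⋯ ≥ b_{m−1} ≥ 0, and let ε ≥ 0. Then the maximum of Σ_i a_i² over all a ∈ ℝ^m with a_0 = 1 and Σ_i |a_i − b_i| ≤ ε equals Σ_i b_i² + 2ε·b_1 + ε²; i.e., every such a satisfies Σ_i a_i² ≤ Σ_i b_i² + 2ε·b_1 + ε², and this value is attained (by adding ε to the second-largest coordinate b_1). -/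
/-! Writing `a = b + d`, we have `∑ aᵢ² = ∑ bᵢ² + 2 ∑ bᵢ dᵢ + ∑ dᵢ²`. Since `a₀ = b₀`, the
perturbation `d` lives on the coordinates `i ≥ 1`, where `0 ≤ bᵢ ≤ b₁`; hence the cross term
is at most `b₁ ∑ |dᵢ| ≤ ε b₁`, and `∑ dᵢ² ≤ (∑ |dᵢ|)² ≤ ε²`. Adding `ε` to `b₁` attains both
bounds. -/

open Finset

section Perturbation

variable {ι : Type*} [Fintype ι]

theorem sum_sq_le_of_sum_abs_sub_le {a b : ι → ℝ} {ε M : ℝ}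
    (hdist : ∑ i, |a i - b i| ≤ ε) (hM : 0 ≤ M) (hb : ∀ i, a i ≠ b i → |b i| ≤ M) :
    ∑ i, a i ^ 2 ≤ ∑ i, b i ^ 2 + 2 * ε * M + ε ^ 2 := by
  have hexpand : ∑ i, a i ^ 2
      = ∑ i, b i ^ 2 + 2 * ∑ i, b i * (a i - b i) + ∑ i, (a i - b i) ^ 2 := by
    simp only [mul_sum, ← sum_add_distrib]
    exact sum_congr rfl fun i _ => by ring
  have hcross : ∑ i, b i * (a i - b i) ≤ M * ε :=
    calc ∑ i, b i * (a i - b i) ≤ ∑ i, M * |a i - b i| := sum_le_sum fun i _ => by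
          by_cases hi : a i = b i
          · simp [hi]
          · calc b i * (a i - b i) ≤ |b i| * |a i - b i| := abs_mul (b i) _ ▸ le_abs_self _
              _ ≤ M * |a i - b i| := mul_le_mul_of_nonneg_right (hb i hi) (abs_nonneg _)
      _ = M * ∑ i, |a i - b i| := (mul_sum _ _ _).symm
      _ ≤ M * ε := mul_le_mul_of_nonneg_left hdist hM
  have hsq : ∑ i, (a i - b i) ^ 2 ≤ ε ^ 2 :=
    calc ∑ i, (a i - b i) ^ 2 = ∑ i, |a i - b i| ^ 2 := by simp only [sq_abs]
      _ ≤ (∑ i, |a i - b i|) ^ 2 := sum_sq_le_sq_sum_of_nonneg fun _ _ => abs_nonneg _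
      _ ≤ ε ^ 2 := pow_le_pow_left₀ (sum_nonneg fun _ _ => abs_nonneg _) hdist 2
  linarith

variable [DecidableEq ι]

theorem sum_abs_update_add_sub (b : ι → ℝ) (j : ι) (ε : ℝ) :
    ∑ i, |Function.update b j (b j + ε) i - b i| = |ε| := by
  rw [Fintype.sum_eq_add_sum_compl j, Function.update_self, add_sub_cancel_left,
    sum_eq_zero fun i hi => by rw [Function.update_of_ne (by simpa using hi), sub_self, abs_zero],
    add_zero]

theorem sum_sq_update_add (b : ι → ℝ) (j : ι) (ε : ℝ) :
    ∑ i, Function.update b j (b j + ε) i ^ 2 = ∑ i, b i ^ 2 + 2 * ε * b j + ε ^ 2 := by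
  rw [Fintype.sum_eq_add_sum_compl j, Fintype.sum_eq_add_sum_compl j (fun i => b i ^ 2),
    Function.update_self,
    sum_congr rfl fun i hi => by rw [Function.update_of_ne (by simpa using hi)]]
  ring

end Perturbation

/-- Theorem 1(a) of the paper: with the largest coordinate fixed to `1` (the top singular
value of `Q`), the maximum of `∑ aᵢ²` over the ℓ1 ball of radius `ε` around `b`, subject to
`a₀ = 1`, equals `∑ bᵢ² + 2ε·b₁ + ε²` (ERMI + 2ε·HGR + ε²). -/
theorem l1_ball_sum_sq_max_top_fixed (m : ℕ) (hm : 2 ≤ m) (b : Fin m → ℝ)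
    (hb0 : b ⟨0, by omega⟩ = 1) (hmono : Antitone b) (hbnn : ∀ i, 0 ≤ b i)
    (ε : ℝ) (hε : 0 ≤ ε) :
    IsGreatest
      {S : ℝ | ∃ a : Fin m → ℝ,
        a ⟨0, by omega⟩ = 1 ∧ (∑ i, |a i - b i|) ≤ ε ∧ S = ∑ i, (a i) ^ 2}
      ((∑ i, (b i) ^ 2) + 2 * ε * b ⟨1, by omega⟩ + ε ^ 2) := by
  refine ⟨⟨Function.update b ⟨1, by omega⟩ (b ⟨1, by omega⟩ + ε), ?_, ?_, ?_⟩, ?_⟩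
  · rw [Function.update_of_ne (by simp), hb0]
  · rw [sum_abs_update_add_sub, abs_of_nonneg hε]
  · rw [sum_sq_update_add]
  · rintro S ⟨a, ha0, hdist, rfl⟩
    refine sum_sq_le_of_sum_abs_sub_le hdist (hbnn _) fun i hi => ?_
    have hi0 : i.val ≠ 0 := fun h => by
      rw [show i = ⟨0, by omega⟩ from Fin.ext h, ha0, hb0] at hi
      exact hi rfl
    rw [abs_of_nonneg (hbnn i)]
    exact hmono (Fin.mk_le_of_le_val (by omega))
end
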